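/- arXiv:2111.13743 — 2 statements merged into one kernel-verified Lean document; each statement's English description precedes it below -/
import Mathlib

section
/- The map sending $y$ to $1 + tx$ defines an isomorphism of $\mathbb{Z}[t,t^{-1}]$-Hopf algebras from the Laurent polynomial Hopf algebra $\mathbb{Z}[t,t^{-1}][y, y^{-1}]$ (with comultiplication $y \mapsto y \otimes y$) to $\mathbb{Z}[t,t^{-1}] \otimes_{\mathbb{Z}[t]} H$, where $H = \mathbb{Z}[t,x]_{1+tx}$ carries comultiplication $x \mapsto x\otimes 1 + 1 \otimes x + t\, x\otimes x$. In particular, as algebras, $\mathbb{Z}[t,t^{-1},x]_{1+tx} \cong \mathbb{Z}[t,t^{-1},y,y^{-1}]$, and the isomorphism intertwines the comultiplications. -/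
open MvPolynomial TensorProduct

noncomputable section

/-- The polynomial ring `ℤ[t,x]`, with `t = X 0` and `x = X 1`. -/
abbrev HopfA : Type := MvPolynomial (Fin 2) ℤ

/-- the element `1 + t*x` -/
abbrev hopfS : HopfA := 1 + X 0 * X 1

/-- `H = ℤ[t,x]_{1+tx}`, the localization of `ℤ[t,x]` away from `1+tx`. -/
abbrev HopfH : Type := Localization.Away hopfS

/-- `H` is a `ℤ[t]`-algebra via `t ↦ t`. -/
instance : Algebra (Polynomial ℤ) HopfH :=
  ((algebraMap HopfA HopfH).comp (Polynomial.aeval (X 0 : HopfA)).toRingHom).toAlgebra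

/-- the element `x` of `H` -/
abbrev hopfX : HopfH := algebraMap HopfA HopfH (X 1)

/-- `ℤ[t,t⁻¹]`, as a `ℤ[t]`-algebra. -/
abbrev LB : Type := LaurentPolynomial ℤ

instance : Algebra (Polynomial ℤ) LB := (Polynomial.toLaurent (R := ℤ)).toAlgebra

/-!
The element `1 + t ⊗ x = 1 ⊗ (1 + tx)` of `ℤ[t,t⁻¹] ⊗_{ℤ[t]} H` is a unit, so `y ↦ 1 + t ⊗ x`
defines the map. A `ℤ[t]`-algebra map out of `H` is the same as an element `b` with `1 + tb`
invertible, and `b = t⁻¹(y - 1)` qualifies because `1 + t · t⁻¹(y - 1) = y`; this gives the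
inverse map `x ↦ t⁻¹(y - 1)`. For the comultiplication, the only nontrivial term is
`t ⊗ (tx ⊗ x) = t² ⊗ (x ⊗ x)`, obtained by moving `t` across the tensor product over `ℤ[t]`.
-/

open scoped LaurentPolynomial

namespace LaurentPolynomial

variable {R A : Type*} [CommSemiring R]

def aeval [CommSemiring A] [Algebra R A] (u : Aˣ) : R[T;T⁻¹] →ₐ[R] A where
  __ := eval₂ (algebraMap R A) u
  commutes' := eval₂_C _ _

@[simp]
lemma aeval_T [CommSemiring A] [Algebra R A] (u : Aˣ) (n : ℤ) :
    aeval (R := R) u (T n) = ↑(u ^ n) :=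
  eval₂_T _ _ _

lemma algHom_ext [Semiring A] [Algebra R A] {f g : R[T;T⁻¹] →ₐ[R] A}
    (h : f (T 1) = g (T 1)) : f = g :=
  AddMonoidAlgebra.algHom_ext' (MonoidHom.ext_mint h) (Subsingleton.elim _ _)

end LaurentPolynomial

lemma algebraMap_X_LB : algebraMap (Polynomial ℤ) LB Polynomial.X = LaurentPolynomial.T 1 :=
  Polynomial.toLaurent_X

lemma algebraMap_X_HopfH :
    algebraMap (Polynomial ℤ) HopfH Polynomial.X = algebraMap HopfA HopfH (X 0) :=
  congrArg (algebraMap HopfA HopfH) (Polynomial.aeval_X _)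

namespace HopfH

variable {B : Type*} [CommRing B] [Algebra (Polynomial ℤ) B]

lemma algHom_ext {f g : HopfH →ₐ[Polynomial ℤ] B} (h : f hopfX = g hopfX) : f = g := by
  apply AlgHom.coe_ringHom_injective
  apply IsLocalization.ringHom_ext (Submonoid.powers hopfS)
  apply MvPolynomial.ringHom_ext'
  · exact Subsingleton.elim _ _
  · intro i
    fin_cases i
    · show f (algebraMap HopfA HopfH (X 0)) = g (algebraMap HopfA HopfH (X 0))
      rw [← algebraMap_X_HopfH, f.commutes, g.commutes]
    · exact h

private def liftPoly (b : B) : HopfA →+* B :=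
  MvPolynomial.eval₂Hom (Int.castRingHom B) ![algebraMap (Polynomial ℤ) B Polynomial.X, b]

private lemma liftPoly_comp_aeval (b : B) :
    (liftPoly b).comp (Polynomial.aeval (X 0 : HopfA)).toRingHom = algebraMap (Polynomial ℤ) B :=
  Polynomial.ringHom_ext' (Subsingleton.elim _ _) (by simp [liftPoly])

private lemma isUnit_liftPoly_hopfS {b : B}
    (hb : IsUnit (1 + algebraMap (Polynomial ℤ) B Polynomial.X * b)) :
    IsUnit (liftPoly b hopfS) := by
  simpa [liftPoly] using hb

def lift (b : B) (hb : IsUnit (1 + algebraMap (Polynomial ℤ) B Polynomial.X * b)) :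
    HopfH →ₐ[Polynomial ℤ] B where
  __ := IsLocalization.Away.lift hopfS (isUnit_liftPoly_hopfS hb)
  commutes' r :=
    (IsLocalization.Away.lift_eq hopfS _ _).trans (RingHom.congr_fun (liftPoly_comp_aeval b) r)

@[simp]
lemma lift_hopfX (b : B) (hb : IsUnit (1 + algebraMap (Polynomial ℤ) B Polynomial.X * b)) :
    lift b hb hopfX = b :=
  (IsLocalization.Away.lift_eq hopfS (isUnit_liftPoly_hopfS hb) (X 1)).trans (by simp [liftPoly])

end HopfH

open LaurentPolynomial (T)

lemma X_smul_LB (a : LB) : (Polynomial.X : Polynomial ℤ) • a = T 1 * a := by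
  rw [Algebra.smul_def, algebraMap_X_LB]

lemma X_smul_HopfH (b : HopfH) :
    (Polynomial.X : Polynomial ℤ) • b = algebraMap HopfA HopfH (X 0) * b := by
  rw [Algebra.smul_def, algebraMap_X_HopfH]

lemma one_add_T_tmul_hopfX :
    (1 : LB ⊗[Polynomial ℤ] HopfH) + T 1 ⊗ₜ hopfX = 1 ⊗ₜ algebraMap HopfA HopfH hopfS := by
  rw [map_add, map_one, map_mul, ← X_smul_HopfH, tmul_add, ← smul_tmul, X_smul_LB, mul_one,
    Algebra.TensorProduct.one_def]

lemma isUnit_one_add_T_tmul_hopfX : IsUnit ((1 : LB ⊗[Polynomial ℤ] HopfH) + T 1 ⊗ₜ hopfX) := by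
  rw [one_add_T_tmul_hopfX]
  exact (IsLocalization.Away.algebraMap_isUnit hopfS).map Algebra.TensorProduct.includeRight

lemma algebraMap_X_LaurentLB :
    algebraMap (Polynomial ℤ) (LB[T;T⁻¹]) Polynomial.X = LaurentPolynomial.C (T 1) := by
  rw [LaurentPolynomial.algebraMap_apply, algebraMap_X_LB]

lemma one_add_C_T_mul_C_T_neg_mul_sub_one :
    1 + LaurentPolynomial.C (T 1) * (LaurentPolynomial.C (T (-1)) * (T 1 - 1))
      = (T 1 : LB[T;T⁻¹]) := by
  rw [← mul_assoc, ← map_mul, ← LaurentPolynomial.T_add, add_neg_cancel, LaurentPolynomial.T_zero,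
    map_one, one_mul, add_sub_cancel]

lemma isUnit_one_add_X_mul_C_T_neg_mul_sub_one :
    IsUnit (1 + algebraMap (Polynomial ℤ) (LB[T;T⁻¹]) Polynomial.X
        * (LaurentPolynomial.C (T (-1)) * (T 1 - 1))) := by
  rw [algebraMap_X_LaurentLB, one_add_C_T_mul_C_T_neg_mul_sub_one]
  exact LaurentPolynomial.isUnit_T 1

def toTensor : LB[T;T⁻¹] →ₐ[LB] LB ⊗[Polynomial ℤ] HopfH :=
  LaurentPolynomial.aeval isUnit_one_add_T_tmul_hopfX.unit

def ofTensor : LB ⊗[Polynomial ℤ] HopfH →ₐ[LB] LB[T;T⁻¹] :=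
  Algebra.TensorProduct.lift (Algebra.ofId _ _)
    (HopfH.lift _ isUnit_one_add_X_mul_C_T_neg_mul_sub_one)
    (fun _ _ => Commute.all _ _)

lemma toTensor_T_one : toTensor (T 1) = 1 + T 1 ⊗ₜ hopfX := by
  simp [toTensor]

lemma toTensor_C (a : LB) : toTensor (LaurentPolynomial.C a) = a ⊗ₜ 1 := by
  rw [LaurentPolynomial.C_eq_algebraMap, AlgHom.commutes, Algebra.TensorProduct.algebraMap_apply,
    Algebra.algebraMap_self_apply]

lemma ofTensor_comp_toTensor : ofTensor.comp toTensor = AlgHom.id _ _ := by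
  apply LaurentPolynomial.algHom_ext
  simpa [toTensor_T_one, ofTensor, algebraMap_X_LaurentLB]
    using one_add_C_T_mul_C_T_neg_mul_sub_one

lemma toTensor_comp_ofTensor : toTensor.comp ofTensor = AlgHom.id _ _ := by
  apply Algebra.TensorProduct.ext (Subsingleton.elim _ _)
  apply HopfH.algHom_ext
  simp only [ofTensor, AlgHom.comp_apply, AlgHom.restrictScalars_apply,
    Algebra.TensorProduct.includeRight_apply, Algebra.TensorProduct.lift_tmul]
  rw [map_one, one_mul, HopfH.lift_hopfX, map_mul, map_sub, map_one, toTensor_C, toTensor_T_one,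
    add_sub_cancel_left, Algebra.TensorProduct.tmul_mul_tmul, ← LaurentPolynomial.T_add,
    neg_add_cancel, LaurentPolynomial.T_zero, one_mul, AlgHom.id_apply]

def laurentEquivTensor : LB[T;T⁻¹] ≃ₐ[LB] LB ⊗[Polynomial ℤ] HopfH :=
  AlgEquiv.ofAlgHom toTensor ofTensor toTensor_comp_ofTensor ofTensor_comp_toTensor

/-- There is an isomorphism of `ℤ[t,t⁻¹]`-algebras
`ℤ[t,t⁻¹][y,y⁻¹] ≅ ℤ[t,t⁻¹] ⊗_{ℤ[t]} H` sending `y ↦ 1 + t⊗x`, and it intertwines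
the comultiplication `y ↦ y ⊗ y` with the base change of the comultiplication
`Δ(x) = x⊗1 + 1⊗x + t·x⊗x` of `H`: the base-changed `Δ` sends `1 + t⊗x` to the
element corresponding to `(1+t⊗x) ⊗ (1+t⊗x)`, namely
`1 + t⊗(x⊗1) + t⊗(1⊗x) + t²⊗(x⊗x)`. -/
theorem stmt_5 :
    ∃ φ : LaurentPolynomial LB ≃ₐ[LB] (LB ⊗[Polynomial ℤ] HopfH),
      φ (LaurentPolynomial.T 1) = 1 + (LaurentPolynomial.T 1 : LB) ⊗ₜ hopfX ∧
      ∀ (Δ : HopfH →ₐ[Polynomial ℤ] HopfH ⊗[Polynomial ℤ] HopfH),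
        Δ hopfX = hopfX ⊗ₜ 1 + 1 ⊗ₜ hopfX +
            ((algebraMap HopfA HopfH (X 0)) * hopfX) ⊗ₜ hopfX →
        (Algebra.TensorProduct.map (AlgHom.id (Polynomial ℤ) LB) Δ)
            (φ (LaurentPolynomial.T 1))
          = 1 + (LaurentPolynomial.T 1 : LB) ⊗ₜ (hopfX ⊗ₜ 1)
              + (LaurentPolynomial.T 1 : LB) ⊗ₜ (1 ⊗ₜ hopfX)
              + (LaurentPolynomial.T 1 * LaurentPolynomial.T 1 : LB) ⊗ₜ
                  (hopfX ⊗ₜ hopfX) := by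
  refine ⟨laurentEquivTensor, toTensor_T_one, fun Δ hΔ => ?_⟩
  have htx_tmul_x : (algebraMap HopfA HopfH (X 0) * hopfX) ⊗ₜ[Polynomial ℤ] hopfX
      = (Polynomial.X : Polynomial ℤ) • (hopfX ⊗ₜ hopfX) := by
    rw [← X_smul_HopfH, smul_tmul']
  rw [laurentEquivTensor, AlgEquiv.ofAlgHom_apply, toTensor_T_one, map_add, map_one,
    Algebra.TensorProduct.map_tmul, AlgHom.id_apply, hΔ, htx_tmul_x, tmul_add, tmul_add,
    ← smul_tmul, X_smul_LB, ← add_assoc, ← add_assoc]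
end
end

section
/- Let $X, X'$ be integral normal noetherian schemes and $f: X' \to X$ a flat morphism. Let $D \subset X$ be a prime Weil divisor such that $D' = f^{-1}(D)$ (scheme-theoretic preimage) is a prime Weil divisor on $X'$. Then $f^*(\mathcal{I}_{D}^{\vee}) \cong \mathcal{I}_{D'}^{\vee}$, i.e., the pullback of the reflexive sheaf $\mathcal{O}_X(D)$ associated to $D$ is the reflexive sheaf $\mathcal{O}_{X'}(D')$ associated to $D'$. -/
open TensorProduct

noncomputable section

variable {R S : Type*} [CommRing R] [CommRing S] [Algebra R S]

/-- The canonical `R`-linear map `Dual R M → Dual S (S ⊗[R] M)`. -/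
def dualBC (M : Type*) [AddCommGroup M] [Module R M] :
    Module.Dual R M →ₗ[R] Module.Dual S (S ⊗[R] M) :=
  ((LinearMap.llcomp S (S ⊗[R] M) (S ⊗[R] R) S
      (AlgebraTensorModule.rid R S S).toLinearMap).restrictScalars R) ∘ₗ
    (AlgebraTensorModule.lTensor S S (N := M) (Q := R))

@[simp] lemma dualBC_tmul {M : Type*} [AddCommGroup M] [Module R M]
    (f : Module.Dual R M) (s : S) (m : M) :
    dualBC (S := S) M f (s ⊗ₜ[R] m) = f m • s := by
  simp [dualBC]

/-- The canonical `S`-linear map `S ⊗ Dual R M → Dual S (S ⊗[R] M)`. -/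
def dualBCS (M : Type*) [AddCommGroup M] [Module R M] :
    S ⊗[R] Module.Dual R M →ₗ[S] Module.Dual S (S ⊗[R] M) :=
  LinearMap.liftBaseChange S (dualBC M)

@[simp] lemma dualBCS_tmul {M : Type*} [AddCommGroup M] [Module R M]
    (f : Module.Dual R M) (s t : S) (m : M) :
    dualBCS (R := R) (S := S) M (s ⊗ₜ[R] f) (t ⊗ₜ[R] m) = (s * t) * algebraMap R S (f m) := by
  simp [dualBCS, Algebra.smul_def]
  ring

lemma dualBCS_natural {M N : Type*} [AddCommGroup M] [Module R M]
    [AddCommGroup N] [Module R N] (u : M →ₗ[R] N) :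
    (AlgebraTensorModule.lTensor S S u).dualMap ∘ₗ dualBCS (R := R) (S := S) N =
      dualBCS (R := R) (S := S) M ∘ₗ AlgebraTensorModule.lTensor S S u.dualMap := by
  apply LinearMap.ext
  intro x
  induction x with
  | zero => simp
  | add a b ha hb => simp [map_add, ha, hb]
  | tmul s f =>
    apply LinearMap.ext
    intro y
    induction y with
    | zero => simp
    | add a b ha hb =>
      simp only [LinearMap.coe_comp, Function.comp_apply, LinearMap.dualMap_apply,
        AlgebraTensorModule.coe_lTensor] at ha hb
      simp [map_add, ha, hb, AlgebraTensorModule.coe_lTensor]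
    | tmul t m => simp

section Free
variable (ι : Type*) [Fintype ι] [DecidableEq ι]

/-- Explicit inverse in the finite free case. -/
def dualBCSInvFree : Module.Dual S (S ⊗[R] (ι → R)) →ₗ[S] S ⊗[R] Module.Dual R (ι → R) where
  toFun φ := ∑ i, φ ((1 : S) ⊗ₜ[R] Pi.single i 1) ⊗ₜ[R] (LinearMap.proj i)
  map_add' φ ψ := by simp [add_tmul, Finset.sum_add_distrib]
  map_smul' s φ := by simp [Finset.smul_sum, smul_tmul']

lemma pi_single_sum (x : ι → R) : x = ∑ i, x i • (Pi.single i (1 : R) : ι → R) := by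
  ext j
  simp [Pi.single_apply, Finset.sum_apply]

lemma dualBCS_bijective_free :
    Function.Bijective (dualBCS (R := R) (S := S) (ι → R)) := by
  have hleft : (dualBCSInvFree (R := R) (S := S) ι) ∘ₗ dualBCS (R := R) (S := S) (ι → R) =
      LinearMap.id := by
    apply LinearMap.ext
    intro x
    induction x with
    | zero => simp
    | add a b ha hb => simp only [map_add, ha, hb]
    | tmul s f =>
      show ∑ i, (dualBCS (R := R) (S := S) (ι → R)) (s ⊗ₜ[R] f) ((1:S) ⊗ₜ[R] Pi.single i 1) ⊗ₜ[R]
          (LinearMap.proj i : (ι → R) →ₗ[R] R) = s ⊗ₜ[R] f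
      have h1 : ∀ i, (dualBCS (R := R) (S := S) (ι → R)) (s ⊗ₜ[R] f) ((1:S) ⊗ₜ[R] Pi.single i 1)
          = s * algebraMap R S (f (Pi.single i 1)) := by
        intro i; simp
      simp only [h1]
      have hsum : ∀ i : ι, (s * algebraMap R S (f (Pi.single i 1))) ⊗ₜ[R]
            (LinearMap.proj i : (ι → R) →ₗ[R] R)
          = s ⊗ₜ[R] (f (Pi.single i 1) • (LinearMap.proj i : (ι → R) →ₗ[R] R)) := by
        intro i
        rw [mul_comm, ← Algebra.smul_def, smul_tmul]
      simp only [hsum, ← tmul_sum]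
      congr 1
      apply LinearMap.ext
      intro x
      conv_rhs => rw [LinearMap.pi_apply_eq_sum_univ f x]
      simp only [LinearMap.sum_apply, LinearMap.smul_apply, LinearMap.proj_apply, smul_eq_mul]
      refine Finset.sum_congr rfl fun i _ => ?_
      rw [mul_comm]
      congr 2
      funext j
      simp [Pi.single_apply, eq_comm]
  have hright : (dualBCS (R := R) (S := S) (ι → R)) ∘ₗ (dualBCSInvFree (R := R) (S := S) ι) =
      LinearMap.id := by
    apply LinearMap.ext
    intro φ
    apply LinearMap.ext
    intro y
    simp only [LinearMap.coe_comp, Function.comp_apply, LinearMap.id_coe, id_eq]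
    rw [show (dualBCSInvFree (R := R) (S := S) ι) φ
        = ∑ i, φ ((1:S) ⊗ₜ[R] Pi.single i 1) ⊗ₜ[R]
            (LinearMap.proj i : (ι → R) →ₗ[R] R) from rfl, map_sum]
    induction y with
    | zero => simp
    | add a b ha hb =>
      simp only [map_add, LinearMap.sum_apply] at ha hb ⊢
      rw [ha, hb]
    | tmul t x =>
      simp only [LinearMap.sum_apply, dualBCS_tmul, LinearMap.proj_apply]
      have hx : t ⊗ₜ[R] x
          = ∑ i, (algebraMap R S (x i) * t) • ((1:S) ⊗ₜ[R] (Pi.single i 1 : ι → R)) := by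
        conv_lhs => rw [pi_single_sum ι x, tmul_sum]
        refine Finset.sum_congr rfl fun i _ => ?_
        rw [tmul_smul, smul_tmul', smul_tmul', smul_eq_mul, mul_one, Algebra.smul_def]
      conv_rhs => rw [hx, map_sum]
      refine Finset.sum_congr rfl fun i _ => ?_
      rw [map_smul, smul_eq_mul]
      ring
  have h1 : Function.LeftInverse (dualBCSInvFree (R := R) (S := S) ι)
      (dualBCS (R := R) (S := S) (ι → R)) := fun x => by
    rw [← LinearMap.comp_apply, hleft]; rfl
  have h2 : Function.RightInverse (dualBCSInvFree (R := R) (S := S) ι)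
      (dualBCS (R := R) (S := S) (ι → R)) := fun x => by
    rw [← LinearMap.comp_apply, hright]; rfl
  exact ⟨h1.injective, h2.surjective⟩

end Free

section DualExact
variable {A M1 M2 M3 : Type*} [CommRing A]
  [AddCommGroup M1] [Module A M1] [AddCommGroup M2] [Module A M2] [AddCommGroup M3] [Module A M3]

lemma dual_exact (g : M1 →ₗ[A] M2) (π : M2 →ₗ[A] M3) (hπ : Function.Surjective π)
    (h : Function.Exact g π) : Function.Exact π.dualMap g.dualMap := by
  intro φ
  constructor
  · intro hφ
    have hker : LinearMap.ker π ≤ LinearMap.ker φ := by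
      intro x hx
      obtain ⟨y, rfl⟩ := (h x).mp hx
      exact congrFun (congrArg DFunLike.coe hφ) y
    refine ⟨((LinearMap.ker π).liftQ φ hker) ∘ₗ
      (π.quotKerEquivOfSurjective hπ).symm.toLinearMap, ?_⟩
    apply LinearMap.ext; intro x
    have he : (π.quotKerEquivOfSurjective hπ).symm (π x) = Submodule.Quotient.mk x := by
      apply (π.quotKerEquivOfSurjective hπ).injective
      simp [LinearMap.quotKerEquivOfSurjective]
    simp [he]
  · rintro ⟨ψ, rfl⟩
    apply LinearMap.ext; intro y
    have : π (g y) = 0 := (h (g y)).mpr ⟨y, rfl⟩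
    simp [this]
end DualExact

/-- Four-lemma style diagram chase. -/
lemma chase {T : Type*} [CommRing T] {A B C A' B' C' : Type*}
    [AddCommGroup A] [Module T A] [AddCommGroup B] [Module T B] [AddCommGroup C] [Module T C]
    [AddCommGroup A'] [Module T A'] [AddCommGroup B'] [Module T B'] [AddCommGroup C'] [Module T C']
    (i : A →ₗ[T] B) (g : B →ₗ[T] C) (i' : A' →ₗ[T] B') (g' : B' →ₗ[T] C')
    (ΦA : A →ₗ[T] A') (ΦB : B →ₗ[T] B') (ΦC : C →ₗ[T] C')
    (sq1 : i' ∘ₗ ΦA = ΦB ∘ₗ i) (sq2 : g' ∘ₗ ΦB = ΦC ∘ₗ g)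
    (hi : Function.Injective i) (hi' : Function.Injective i')
    (hex : Function.Exact i g) (hex' : Function.Exact i' g')
    (hB : Function.Bijective ΦB) (hC : Function.Injective ΦC) :
    Function.Bijective ΦA := by
  have sq1' : ∀ a, i' (ΦA a) = ΦB (i a) := fun a => congrFun (congrArg DFunLike.coe sq1) a
  have sq2' : ∀ b, g' (ΦB b) = ΦC (g b) := fun b => congrFun (congrArg DFunLike.coe sq2) b
  constructor
  · intro a₁ a₂ hab
    apply hi
    apply hB.injective
    rw [← sq1', ← sq1', hab]
  · intro a'
    obtain ⟨b, hb⟩ := hB.surjective (i' a')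
    have hgb : g b = 0 := by
      apply hC
      rw [← sq2', hb, map_zero]
      exact (hex' (i' a')).mpr ⟨a', rfl⟩
    obtain ⟨a, ha⟩ := (hex b).mp hgb
    refine ⟨a, hi' ?_⟩
    rw [sq1', ha, hb]

set_option maxHeartbeats 1000000 in
open LinearMap in
theorem dualBCS_bijective (M : Type*) [AddCommGroup M] [Module R M]
    [Module.Flat R S] [Module.FinitePresentation R M] :
    Function.Bijective (dualBCS (R := R) (S := S) M) := by
  classical
  obtain ⟨n, π, hπ⟩ := Module.Finite.exists_fin' R M
  have hkerfg : (LinearMap.ker π).FG := Module.FinitePresentation.fg_ker π hπ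
  have : Module.Finite R ↥(LinearMap.ker π) := Module.Finite.iff_fg.mpr hkerfg
  obtain ⟨m, ρ, hρ⟩ := Module.Finite.exists_fin' R ↥(LinearMap.ker π)
  set g : (Fin m → R) →ₗ[R] (Fin n → R) := (LinearMap.ker π).subtype ∘ₗ ρ with hg
  have hexact : Function.Exact g π := by
    rw [LinearMap.exact_iff, hg, LinearMap.range_comp, LinearMap.range_eq_top.mpr hρ,
      Submodule.map_top, Submodule.range_subtype]
  -- row 1 (base-changed duals over R)
  have hdual_inj : Function.Injective π.dualMap :=
    LinearMap.dualMap_injective_of_surjective hπ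
  have hdual_exact : Function.Exact π.dualMap g.dualMap := dual_exact g π hπ hexact
  have hi : Function.Injective (AlgebraTensorModule.lTensor S S π.dualMap) := by
    rw [AlgebraTensorModule.coe_lTensor]
    exact Module.Flat.lTensor_preserves_injective_linearMap _ hdual_inj
  have hex : Function.Exact (AlgebraTensorModule.lTensor S S π.dualMap)
      (AlgebraTensorModule.lTensor S S g.dualMap) := by
    rw [AlgebraTensorModule.coe_lTensor, AlgebraTensorModule.coe_lTensor]
    exact Module.Flat.lTensor_exact S hdual_exact
  -- row 2 (duals over S of base-changed presentation)
  have hπ' : Function.Surjective (AlgebraTensorModule.lTensor S S π) := by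
    rw [AlgebraTensorModule.coe_lTensor]
    exact LinearMap.lTensor_surjective S hπ
  have hexact' : Function.Exact (AlgebraTensorModule.lTensor S S g)
      (AlgebraTensorModule.lTensor S S π) := by
    rw [AlgebraTensorModule.coe_lTensor, AlgebraTensorModule.coe_lTensor]
    exact Module.Flat.lTensor_exact S hexact
  have hi' : Function.Injective (AlgebraTensorModule.lTensor S S π).dualMap :=
    LinearMap.dualMap_injective_of_surjective hπ'
  have hex' : Function.Exact (AlgebraTensorModule.lTensor S S π).dualMap
      (AlgebraTensorModule.lTensor S S g).dualMap :=
    dual_exact _ _ hπ' hexact'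
  exact chase (AlgebraTensorModule.lTensor S S π.dualMap)
    (AlgebraTensorModule.lTensor S S g.dualMap)
    (AlgebraTensorModule.lTensor S S π).dualMap
    (AlgebraTensorModule.lTensor S S g).dualMap
    (dualBCS M) (dualBCS (Fin n → R)) (dualBCS (Fin m → R))
    (dualBCS_natural π) (dualBCS_natural g)
    hi hi' hex hex'
    (dualBCS_bijective_free (Fin n)) (dualBCS_bijective_free (Fin m)).injective

end

/-- Affine/module-theoretic form of: for a flat morphism `f : X' → X` of integral
normal noetherian schemes and a prime Weil divisor `D ⊂ X` whose scheme-theoretic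
preimage `D' = f⁻¹(D)` is a prime Weil divisor on `X'`, one has
`f^*(𝓘_D^∨) ≅ 𝓘_{D'}^∨`, i.e. the pullback of the reflexive sheaf `𝒪_X(D)` is
`𝒪_{X'}(D')`.

Let `R → S` be a flat map of noetherian integrally closed domains, `p ⊂ R` a prime
ideal (the ideal of `D`) whose extension `pS` is prime (the ideal of `D'`).  Then
`S ⊗_R Hom_R(p, R) ≅ Hom_S(pS, S)` as `S`-modules. -/
theorem stmt_19 {R S : Type*} [CommRing R] [IsDomain R] [IsIntegrallyClosed R]
    [IsNoetherianRing R] [CommRing S] [IsDomain S] [IsIntegrallyClosed S]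
    [IsNoetherianRing S] [Algebra R S] [Module.Flat R S]
    (p : Ideal R) (hp : p.IsPrime)
    (hq : (p.map (algebraMap R S)).IsPrime) :
    Nonempty ((S ⊗[R] Module.Dual R p) ≃ₗ[S] Module.Dual S (p.map (algebraMap R S))) := by
  classical
  -- `p` is finitely presented
  have : Module.Finite R ↥p := Module.Finite.iff_fg.mpr (IsNoetherian.noetherian p)
  have : Module.FinitePresentation R ↥p := (Module.finitePresentation_iff_finite R ↥p).mpr this
  -- the comparison map `S ⊗ p → S` and its image `pS`
  set ψ : S ⊗[R] ↥p →ₗ[S] S :=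
    (AlgebraTensorModule.rid R S S).toLinearMap ∘ₗ AlgebraTensorModule.lTensor S S p.subtype
    with hψ
  have hψtmul : ∀ (s : S) (a : ↥p), ψ (s ⊗ₜ[R] a) = algebraMap R S (a : R) * s := by
    intro s a
    simp [hψ, Algebra.smul_def]
  have hψinj : Function.Injective ψ := by
    apply Function.Injective.comp (AlgebraTensorModule.rid R S S).injective
    rw [AlgebraTensorModule.coe_lTensor]
    exact Module.Flat.lTensor_preserves_injective_linearMap _ p.injective_subtype
  have hrange : LinearMap.range ψ = (p.map (algebraMap R S) : Submodule S S) := by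
    apply le_antisymm
    · rintro x ⟨y, rfl⟩
      induction y with
      | zero => simp
      | add a b ha hb => rw [map_add]; exact Submodule.add_mem _ ha hb
      | tmul s a =>
        rw [hψtmul]
        exact Ideal.mul_mem_right s _ (Ideal.mem_map_of_mem _ a.2)
    · rw [show (p.map (algebraMap R S) : Submodule S S) ≤ LinearMap.range ψ ↔
          p.map (algebraMap R S) ≤ LinearMap.range ψ from Iff.rfl]
      rw [Ideal.map_le_iff_le_comap]
      intro a ha
      refine ⟨(1 : S) ⊗ₜ[R] ⟨a, ha⟩, ?_⟩
      rw [hψtmul, mul_one]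
  let e2 : (S ⊗[R] ↥p) ≃ₗ[S] ↥(p.map (algebraMap R S)) :=
    (LinearEquiv.ofInjective ψ hψinj).trans (LinearEquiv.ofEq _ _ hrange)
  let e1 : (S ⊗[R] Module.Dual R ↥p) ≃ₗ[S] Module.Dual S (S ⊗[R] ↥p) :=
    LinearEquiv.ofBijective (dualBCS (R := R) (S := S) ↥p) (dualBCS_bijective ↥p)
  exact ⟨e1.trans e2.dualMap.symm⟩
end
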